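/- arXiv:1605.02210 — 2 statements merged into one kernel-verified Lean document; each statement's English description precedes it below -/
import Mathlib

section
/- Let Σ↔ consist of the single annotated bidirectional dependency R(x,y) ↔ T¹(x) ∧ S¹(y) and let I be the source instance with R^I = {(a,b),(c,d)} where a,b,c,d are pairwise distinct constants. Then there is no target instance J and tuple-labeling function ℓ such that (I,J) ⊨_ℓ Σ↔; i.e., the ABD-semantics of I under Σ↔ is empty. -/
/-- Model-theoretic satisfaction of the de-annotated dependency
`∀x∀y (R(x,y) ↔ T₁(x) ∧ S₁(y))` over the annotated schema, where `T'` and `S'` are the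
families of annotated target relations (indexed by the annotation). -/
def diaSat {α : Type} (I' : Set (α × α)) (T' S' : ℤ → Set α) : Prop :=
  ∀ x y : α, (x, y) ∈ I' ↔ (x ∈ T' 1 ∧ y ∈ S' 1)

/-- Pointwise inclusion of indexed families of relations. -/
def famLe {α : Type} (F G : ℤ → Set α) : Prop := ∀ i, F i ⊆ G i

/-- The annotated instance `J_ℓ` determined by a target relation and its labeling. -/
def labFam {α : Type} (Xset : Set α) (ℓ : α → Set ℤ) : ℤ → Set α :=
  fun i => { x | x ∈ Xset ∧ i ∈ ℓ x }

/-- Existence of a subset-minimal witness `(I',J'_ℓ)` for a labeled tuple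
(specified by `inWit`) in the semantics of the abd `R(x,y) ↔ T¹(x) ∧ S¹(y)`. -/
def minimalWitness {α : Type} (I : Set (α × α)) (Tset Sset : Set α)
    (ℓT ℓS : α → Set ℤ) (inWit : (ℤ → Set α) → (ℤ → Set α) → Prop) : Prop :=
  ∃ I' ⊆ I, ∃ T' S' : ℤ → Set α,
    famLe T' (labFam Tset ℓT) ∧ famLe S' (labFam Sset ℓS) ∧
    inWit T' S' ∧ diaSat I' T' S' ∧
    ∀ T'' S'' : ℤ → Set α, famLe T'' T' → famLe S'' S' →
      diaSat I' T'' S'' → T'' = T' ∧ S'' = S'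

/-- `(I,J) ⊨_ℓ Σ↔` for `Σ↔ = { R(x,y) ↔ T¹(x) ∧ S¹(y) }`: labels are nonempty, the
annotated instance models the dependency, and every labeled tuple has a subset-minimal
witness. -/
def abdSat {α : Type} (I : Set (α × α)) (Tset Sset : Set α)
    (ℓT ℓS : α → Set ℤ) : Prop :=
  (∀ x ∈ Tset, (ℓT x).Nonempty) ∧ (∀ y ∈ Sset, (ℓS y).Nonempty) ∧
  diaSat I (labFam Tset ℓT) (labFam Sset ℓS) ∧
  (∀ x ∈ Tset, ∀ i ∈ ℓT x,
    minimalWitness I Tset Sset ℓT ℓS (fun T' _ => x ∈ T' i)) ∧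
  (∀ y ∈ Sset, ∀ i ∈ ℓS y,
    minimalWitness I Tset Sset ℓT ℓS (fun _ S' => y ∈ S' i))

/-- For `Σ↔ = { R(x,y) ↔ T¹(x) ∧ S¹(y) }` and `R^I = {(a,b),(c,d)}` with pairwise
distinct constants, there is no target instance `J` and tuple-labeling `ℓ` with
`(I,J) ⊨_ℓ Σ↔`: the ABD-semantics of `I` is empty. -/
theorem stmt9 {α : Type} (a b c d : α)
    (hdist : List.Pairwise (· ≠ ·) [a, b, c, d]) :
    ¬ ∃ (Tset Sset : Set α) (ℓT ℓS : α → Set ℤ),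
        abdSat ({(a, b), (c, d)} : Set (α × α)) Tset Sset ℓT ℓS := by
  rintro ⟨Tset, Sset, ℓT, ℓS, ⟨-, -, H, -, -⟩⟩
  simp only [List.pairwise_cons] at hdist
  have hac : a ≠ c := hdist.1 c (by simp)
  have hbd : b ≠ d := hdist.2.1 d (by simp)
  have hab := (H a b).mp (by left; rfl)
  have hcd := (H c d).mp (by right; rfl)
  have had := (H a d).mpr ⟨hab.1, hcd.2⟩
  rcases had with h | h
  · exact hbd (congrArg Prod.snd h).symm
  · exact hac (congrArg Prod.fst h)
end

section
/- Let Σ = { ∀x∀y (R(x,y) → ∃z (S(x,z) ∧ V(z,y))) } and I be the source instance with R^I = {(a,b),(c,d)}, a,b,c,d pairwise distinct constants. Consider the target instance family Rep(T,φ*) given by the semi-naïve table T with S^T = {(a,⊥ᵒ₁),(c,⊥ᵒ₂)}, V^T = {(⊥ᵒ₁,b),(⊥ᵒ₂,d)} and global condition φ* := (⊥ᵒ₁ ≠ ⊥ᵒ₂). Then for the Boolean query q := ∃x∃y∃z₁∃z₂ (S(x,z₁) ∧ V(z₂,y) ∧ z₁ ≠ z₂), every instance J ∈ Rep(T,φ*)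 satisfies q, whereas the instance J₀ with S^{J₀} = {(a,e),(c,e)} and V^{J₀} = {(e,b),(e,d)} satisfies (I,J₀) ⊨ Σ but does not satisfy q; hence the OWA certain answer of q is false while the certain answer over Rep(T,φ*) is true. -/
/-- For Σ = { R(x,y) → ∃z (S(x,z) ∧ V(z,y)) } and I with R^I = {(a,b),(c,d)}:
every instance in Rep(T,φ*) — where T has S^T = {(a,⊥ᵒ₁),(c,⊥ᵒ₂)},
V^T = {(⊥ᵒ₁,b),(⊥ᵒ₂,d)} and φ* = (⊥ᵒ₁ ≠ ⊥ᵒ₂), built from open-null valuations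
`p i` (for ⊥ᵒ₁) and `q i` (for ⊥ᵒ₂) with `p i ≠ q j` — satisfies the query
q = ∃x∃y∃z₁∃z₂ (S(x,z₁) ∧ V(z₂,y) ∧ z₁ ≠ z₂); whereas the instance J₀ with
S^{J₀} = {(a,e),(c,e)}, V^{J₀} = {(e,b),(e,d)} satisfies (I,J₀) ⊨ Σ but not q.
Hence the OWA certain answer of q is false while the certain answer over Rep(T,φ*)
is true. -/
theorem stmt19 {α : Type} (a b c d e : α)
    (hdist : List.Pairwise (· ≠ ·) [a, b, c, d, e]) :
    (∀ n : ℕ, 0 < n → ∀ p q : Fin n → α, (∀ i j : Fin n, p i ≠ q j) →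
      ∃ x y z1 z2 : α,
        (x, z1) ∈ ({ pr | ∃ i : Fin n, pr = (a, p i) } ∪
                    { pr | ∃ i : Fin n, pr = (c, q i) } : Set (α × α)) ∧
        (z2, y) ∈ ({ pr | ∃ i : Fin n, pr = (p i, b) } ∪
                    { pr | ∃ i : Fin n, pr = (q i, d) } : Set (α × α)) ∧
        z1 ≠ z2) ∧
    ((∀ x y : α, (x, y) ∈ ({(a, b), (c, d)} : Set (α × α)) →
        ∃ z : α, (x, z) ∈ ({(a, e), (c, e)} : Set (α × α)) ∧
          (z, y) ∈ ({(e, b), (e, d)} : Set (α × α))) ∧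
     ¬ ∃ x y z1 z2 : α,
        (x, z1) ∈ ({(a, e), (c, e)} : Set (α × α)) ∧
        (z2, y) ∈ ({(e, b), (e, d)} : Set (α × α)) ∧ z1 ≠ z2) := by
  refine ⟨?_, ?_, ?_⟩
  · intro n hn p q hpq
    have i0 : Fin n := ⟨0, hn⟩
    exact ⟨a, d, p i0, q i0, Or.inl ⟨i0, rfl⟩, Or.inr ⟨i0, rfl⟩, hpq i0 i0⟩
  · rintro x y (h | h) <;> simp_all <;> exact ⟨e, by simp⟩
  · rintro ⟨x, y, z1, z2, h1, h2, hne⟩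
    have e1 : z1 = e := by rcases h1 with h | h <;> simp_all
    have e2 : z2 = e := by rcases h2 with h | h <;> simp_all
    exact hne (e1.trans e2.symm)
end
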